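/- For all x, y > 0 with x + y < 1, the quantity 5 sin(π(x+y)) + sin(3π(x+y)) - 2 sin(π(3x+y)) - 2 sin(π(x+3y)) is strictly positive. -/
import Mathlib


open Real

/-- Positivity of the trigonometric combination appearing in the determinant of `H_W`. -/
theorem trig_combination_pos (x y : ℝ) (hx : 0 < x) (hy : 0 < y) (hxy : x + y < 1) :
    0 < 5 * Real.sin (π * (x + y)) + Real.sin (3 * π * (x + y))
        - 2 * Real.sin (π * (3 * x + y)) - 2 * Real.sin (π * (x + 3 * y)) := by
  have hid : 5 * Real.sin (π * (x + y)) + Real.sin (3 * π * (x + y))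
        - 2 * Real.sin (π * (3 * x + y)) - 2 * Real.sin (π * (x + 3 * y))
      = 4 * Real.sin (π * (x + y)) *
        (1 + Real.cos (π * (x + y)) ^ 2
          - 2 * Real.cos (π * (x + y)) * Real.cos (π * (x - y))) := by
    have h1 : π * (3 * x + y) = 2 * (π * (x + y)) + π * (x - y) := by ring
    have h2 : π * (x + 3 * y) = 2 * (π * (x + y)) - π * (x - y) := by ring
    have h3 : 3 * π * (x + y) = 2 * (π * (x + y)) + π * (x + y) := by ring
    rw [h1, h2, h3, Real.sin_add, Real.sin_sub, Real.sin_add, Real.sin_two_mul,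
      Real.cos_two_mul]
    ring
  rw [hid]
  have hsin : 0 < Real.sin (π * (x + y)) := by
    apply Real.sin_pos_of_pos_of_lt_pi
    · positivity
    · nlinarith [Real.pi_pos]
  have hpyth := Real.sin_sq_add_cos_sq (π * (x + y))
  set c := Real.cos (π * (x + y)) with hc
  set d := Real.cos (π * (x - y)) with hd
  have hc2 : c ^ 2 < 1 := by nlinarith
  have hcabs : |c| < 1 := by nlinarith [sq_abs c, abs_nonneg c, sq_nonneg (|c| - 1)]
  have hdabs : |d| ≤ 1 := Real.abs_cos_le_one _
  have h2 : |c * d| ≤ |c| := by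
    rw [abs_mul]; exact mul_le_of_le_one_right (abs_nonneg c) hdabs
  have h3 : c * d ≤ |c * d| := le_abs_self _
  have hfac : 0 < 1 + c ^ 2 - 2 * c * d := by
    nlinarith [mul_pos (sub_pos.mpr hcabs) (sub_pos.mpr hcabs), sq_abs c]
  positivity
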